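/- The birthday of a product of finite-born surreal forms depends only on the birthdays of the factors: if x, x', y, y' are finite-born numeric pregames with g(x) = g(x') and g(y) = g(y'), then g(x·y) = g(x'·y'). -/

import Mathlib

universe u

namespace SetTheory

/-- Pre-games (removed from Mathlib; reproduced here with the December 2024 Mathlib meaning). -/
inductive PGame : Type (u + 1)
  | mk : ∀ α β : Type u, (α → PGame) → (β → PGame) → PGame

namespace PGame

/-- Simultaneous definition of `≤` (first component) and `⧏` (second component). -/
noncomputable def leLF (x : PGame.{u}) : PGame.{u} → Prop × Prop :=
  PGame.rec (motive := fun _ => PGame.{u} → Prop × Prop)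
    (fun _ _ _ _ IHxL IHxR y =>
      PGame.rec (motive := fun _ => Prop × Prop)
        (fun yl yr yL yR IHyL IHyR =>
          ((∀ i, (IHxL i (mk yl yr yL yR)).2) ∧ ∀ j, (IHyR j).2,
           (∃ j, (IHyL j).1) ∨ ∃ i, (IHxR i (mk yl yr yL yR)).1)) y) x

instance : LE PGame.{u} := ⟨fun x y => (leLF x y).1⟩

/-- `x ⧏ y` is defined as `¬ y ≤ x`, as in Mathlib. -/
def LF (x y : PGame.{u}) : Prop := ¬y ≤ x

instance : LT PGame.{u} := ⟨fun x y => x ≤ y ∧ LF x y⟩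

def Numeric : PGame.{u} → Prop
  | ⟨_, _, L, R⟩ => (∀ i j, L i < R j) ∧ (∀ i, Numeric (L i)) ∧ ∀ j, Numeric (R j)

def neg : PGame.{u} → PGame.{u}
  | ⟨l, r, L, R⟩ => ⟨r, l, fun i => neg (R i), fun i => neg (L i)⟩

instance : Neg PGame.{u} := ⟨neg⟩

noncomputable def add (x : PGame.{u}) : PGame.{u} → PGame.{u} :=
  PGame.rec (motive := fun _ => PGame.{u} → PGame.{u})
    (fun xl xr _ _ IHxl IHxr y =>
      PGame.rec (motive := fun _ => PGame.{u})
        (fun yl yr yL yR IHyl IHyr =>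
          mk (xl ⊕ yl) (xr ⊕ yr)
            (Sum.rec (fun i => IHxl i (mk yl yr yL yR)) (fun i => IHyl i))
            (Sum.rec (fun i => IHxr i (mk yl yr yL yR)) (fun i => IHyr i))) y) x

noncomputable instance : Add PGame.{u} := ⟨add⟩

noncomputable instance : Sub PGame.{u} := ⟨fun x y => x + -y⟩

noncomputable def mul (x : PGame.{u}) : PGame.{u} → PGame.{u} :=
  PGame.rec (motive := fun _ => PGame.{u} → PGame.{u})
    (fun xl xr _ _ IHxl IHxr y =>
      PGame.rec (motive := fun _ => PGame.{u})
        (fun yl yr yL yR IHyl IHyr =>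
          mk ((xl × yl) ⊕ (xr × yr)) ((xl × yr) ⊕ (xr × yl))
            (Sum.rec (fun p => IHxl p.1 (mk yl yr yL yR) + IHyl p.2 - IHxl p.1 (yL p.2))
              (fun p => IHxr p.1 (mk yl yr yL yR) + IHyr p.2 - IHxr p.1 (yR p.2)))
            (Sum.rec (fun p => IHxl p.1 (mk yl yr yL yR) + IHyr p.2 - IHxl p.1 (yR p.2))
              (fun p => IHxr p.1 (mk yl yr yL yR) + IHyl p.2 - IHxr p.1 (yL p.2)))) y) x

noncomputable instance : Mul PGame.{u} := ⟨mul⟩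

noncomputable def birthday : PGame.{u} → Ordinal.{u}
  | ⟨_, _, xL, xR⟩ =>
    max (Ordinal.lsub.{u, u} fun i => birthday (xL i)) (Ordinal.lsub.{u, u} fun i => birthday (xR i))

end PGame

end SetTheory

/-! If `x.birthday ≤ x'.birthday`, every option `u` of `x` is matched by an option `u'` of `x'`
with `u.birthday ≤ u'.birthday`. Since the options of `x * y` are the games
`u * y + x * v - u * v` for options `u` of `x` and `v` of `y`, induction on `x` and `y` shows that
`(x * y).birthday` is monotone in `x.birthday` and `y.birthday`, and likewise for sums. -/

namespace SetTheory.PGame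

variable {w x x' y y' z : PGame.{u}}

def IsOption (z : PGame.{u}) : PGame.{u} → Prop
  | mk _ _ L R => (∃ i, L i = z) ∨ ∃ j, R j = z

theorem birthday_le_iff {o : Ordinal.{u}} :
    x.birthday ≤ o ↔ ∀ z, IsOption z x → z.birthday < o := by
  cases x with | mk l r L R =>
  simp only [birthday, IsOption, max_le_iff, Ordinal.lsub_le_iff]
  constructor
  · rintro ⟨hL, hR⟩ z (⟨i, rfl⟩ | ⟨j, rfl⟩)
    exacts [hL i, hR j]
  · intro h
    exact ⟨fun i => h _ (.inl ⟨i, rfl⟩), fun j => h _ (.inr ⟨j, rfl⟩)⟩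

theorem IsOption.birthday_lt (h : IsOption z x) : z.birthday < x.birthday :=
  birthday_le_iff.1 le_rfl z h

theorem exists_isOption_le_birthday {o : Ordinal.{u}} (h : o < x.birthday) :
    ∃ z, IsOption z x ∧ o ≤ z.birthday := by
  by_contra! h'
  exact h.not_ge (birthday_le_iff.2 h')

theorem IsOption.exists_birthday_le (h : IsOption z x) (hx : x.birthday ≤ x'.birthday) :
    ∃ z', IsOption z' x' ∧ z.birthday ≤ z'.birthday :=
  exists_isOption_le_birthday (h.birthday_lt.trans_le hx)

theorem wf_isOption : WellFounded (IsOption : PGame.{u} → PGame.{u} → Prop) :=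
  Subrelation.wf IsOption.birthday_lt (InvImage.wf birthday wellFounded_lt)

theorem birthday_neg (x : PGame.{u}) : (-x).birthday = x.birthday := by
  induction x with
  | mk l r L R ihL ihR =>
    show birthday (mk r l (fun j => -R j) (fun i => -L i)) = birthday (mk l r L R)
    simp only [birthday, ihL, ihR]
    exact max_comm _ _

theorem isOption_add_iff : IsOption w (x + y) ↔
    (∃ u, IsOption u x ∧ w = u + y) ∨ ∃ v, IsOption v y ∧ w = x + v := by
  cases x; cases y
  constructor
  · rintro (⟨i | i, rfl⟩ | ⟨j | j, rfl⟩)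
    exacts [.inl ⟨_, .inl ⟨i, rfl⟩, rfl⟩, .inr ⟨_, .inl ⟨i, rfl⟩, rfl⟩,
      .inl ⟨_, .inr ⟨j, rfl⟩, rfl⟩, .inr ⟨_, .inr ⟨j, rfl⟩, rfl⟩]
  · rintro (⟨_, ⟨i, rfl⟩ | ⟨j, rfl⟩, rfl⟩ | ⟨_, ⟨i, rfl⟩ | ⟨j, rfl⟩, rfl⟩)
    exacts [.inl ⟨.inl i, rfl⟩, .inr ⟨.inl j, rfl⟩, .inl ⟨.inr i, rfl⟩, .inr ⟨.inr j, rfl⟩]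

theorem isOption_mul_iff : IsOption w (x * y) ↔
    ∃ u v, IsOption u x ∧ IsOption v y ∧ w = u * y + x * v - u * v := by
  cases x; cases y
  constructor
  · rintro (⟨⟨i, j⟩ | ⟨i, j⟩, rfl⟩ | ⟨⟨i, j⟩ | ⟨i, j⟩, rfl⟩)
    exacts [⟨_, _, .inl ⟨i, rfl⟩, .inl ⟨j, rfl⟩, rfl⟩, ⟨_, _, .inr ⟨i, rfl⟩, .inr ⟨j, rfl⟩, rfl⟩,
      ⟨_, _, .inl ⟨i, rfl⟩, .inr ⟨j, rfl⟩, rfl⟩, ⟨_, _, .inr ⟨i, rfl⟩, .inl ⟨j, rfl⟩, rfl⟩]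
  · rintro ⟨_, _, ⟨i, rfl⟩ | ⟨i, rfl⟩, ⟨j, rfl⟩ | ⟨j, rfl⟩, rfl⟩
    exacts [.inl ⟨.inl (i, j), rfl⟩, .inr ⟨.inl (i, j), rfl⟩,
      .inr ⟨.inr (i, j), rfl⟩, .inl ⟨.inr (i, j), rfl⟩]

theorem birthday_add_le_birthday_add (hx : x.birthday ≤ x'.birthday)
    (hy : y.birthday ≤ y'.birthday) : (x + y).birthday ≤ (x' + y').birthday := by
  induction x using wf_isOption.induction generalizing x' y y' with | _ x ihx =>
  induction y using wf_isOption.induction generalizing x' y' with | _ y ihy =>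
  refine birthday_le_iff.2 fun _ hw => ?_
  rcases isOption_add_iff.1 hw with ⟨u, hu, rfl⟩ | ⟨v, hv, rfl⟩
  · obtain ⟨u', hu', hle⟩ := hu.exists_birthday_le hx
    calc (u + y).birthday ≤ (u' + y').birthday := ihx u hu hle hy
      _ < (x' + y').birthday := (isOption_add_iff.2 (.inl ⟨u', hu', rfl⟩)).birthday_lt
  · obtain ⟨v', hv', hle⟩ := hv.exists_birthday_le hy
    calc (x + v).birthday ≤ (x' + v').birthday := ihy v hv hx hle
      _ < (x' + y').birthday := (isOption_add_iff.2 (.inr ⟨v', hv', rfl⟩)).birthday_lt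

theorem birthday_sub_le_birthday_sub (hx : x.birthday ≤ x'.birthday)
    (hy : y.birthday ≤ y'.birthday) : (x - y).birthday ≤ (x' - y').birthday :=
  birthday_add_le_birthday_add hx (by rwa [birthday_neg, birthday_neg])

theorem birthday_mul_le_birthday_mul (hx : x.birthday ≤ x'.birthday)
    (hy : y.birthday ≤ y'.birthday) : (x * y).birthday ≤ (x' * y').birthday := by
  induction x using wf_isOption.induction generalizing x' y y' with | _ x ihx =>
  induction y using wf_isOption.induction generalizing x' y' with | _ y ihy =>
  refine birthday_le_iff.2 fun _ hw => ?_
  obtain ⟨u, v, hu, hv, rfl⟩ := isOption_mul_iff.1 hw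
  obtain ⟨u', hu', hu_le⟩ := hu.exists_birthday_le hx
  obtain ⟨v', hv', hv_le⟩ := hv.exists_birthday_le hy
  calc (u * y + x * v - u * v).birthday ≤ (u' * y' + x' * v' - u' * v').birthday :=
        birthday_sub_le_birthday_sub
          (birthday_add_le_birthday_add (ihx u hu hu_le hy) (ihy v hv hx hv_le))
          (ihx u hu hu_le hv_le)
    _ < (x' * y').birthday := (isOption_mul_iff.2 ⟨u', v', hu', hv', rfl⟩).birthday_lt

end SetTheory.PGame

open SetTheory PGame Ordinal

theorem birthday_mul_congr_general (x x' y y' : PGame)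
    (hxx : x.birthday = x'.birthday) (hyy : y.birthday = y'.birthday) :
    (x * y).birthday = (x' * y').birthday :=
  (birthday_mul_le_birthday_mul hxx.le hyy.le).antisymm
    (birthday_mul_le_birthday_mul hxx.ge hyy.ge)

theorem birthday_mul_congr (x x' y y' : PGame)
    (hx : x.Numeric) (hx' : x'.Numeric) (hy : y.Numeric) (hy' : y'.Numeric)
    (hxf : x.birthday < Ordinal.omega0) (hx'f : x'.birthday < Ordinal.omega0)
    (hyf : y.birthday < Ordinal.omega0) (hy'f : y'.birthday < Ordinal.omega0)
    (hxx : x.birthday = x'.birthday) (hyy : y.birthday = y'.birthday) :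
    (x * y).birthday = (x' * y').birthday :=
  birthday_mul_congr_general x x' y y' hxx hyy
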